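/- arXiv:1604.06554 — 5 statements merged into one kernel-verified Lean document; each statement's English description precedes it below -/
import Mathlib

section
/- The number of binary trees with n labeled nodes such that every right node v (a non-root node that is the second child of its parent) satisfies parent(v) > v equals (n+1)^(n-1). -/
/-- Binary trees: each node has a label and exactly two children (each a node or a leaf). -/
inductive BTree : Type
  | leaf : BTree
  | node (label : ℕ) (l r : BTree) : BTree

/-- Node labels in prefix order. -/
def BTree.labels : BTree → List ℕ
  | .leaf => []
  | .node a l r => a :: (l.labels ++ r.labels)

/-- Every right node `v` (a non-root node which is the second child of its parent `u`)
satisfies `u > v`. -/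
def BTree.rightDesc : BTree → Prop
  | .leaf => True
  | .node a l r => l.rightDesc ∧ r.rightDesc ∧ ∀ b x y, r = .node b x y → b < a

/-!
Generalise from one tree to forests: `ShiForest ι s` is an `ι`-indexed family of trees satisfying
the right-node condition whose labels together are exactly `s`. The right spine of such a tree is
strictly decreasing, so it is determined by its label set `K`; cutting it off the tree in one slot
turns the left subtrees hanging from it into `#K` new slots with labels `s \ K`. Hence the number
`f m k` of forests with `m` labels and `k` slots satisfies
`f m (k + 1) = ∑ j, (m choose j) * f (m - j) (j + k)`, and `k * (m + k) ^ (m - 1)` satisfies the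
same recursion by the binomial theorem and its derivative. One slot gives the theorem.
-/

open Finset

namespace BTree

def rightSpine : BTree → List ℕ
  | leaf => []
  | node a _ r => a :: r.rightSpine

def leftOf : BTree → ℕ → BTree
  | leaf, _ => leaf
  | node b l r, a => if a = b then l else r.leftOf a

def ofRightSpine (f : ℕ → BTree) : List ℕ → BTree
  | [] => leaf
  | a :: as => node a (f a) (ofRightSpine f as)

@[simp] theorem rightSpine_ofRightSpine (f : ℕ → BTree) (as : List ℕ) :
    (ofRightSpine f as).rightSpine = as := by
  induction as <;> simp_all [ofRightSpine, rightSpine]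

theorem leftOf_ofRightSpine {f : ℕ → BTree} {as : List ℕ} {a : ℕ} (h : a ∈ as) :
    (ofRightSpine f as).leftOf a = f a := by
  induction as with
  | nil => simp at h
  | cons b as ih =>
    simp only [ofRightSpine, leftOf]
    split_ifs with hab
    · rw [hab]
    · exact ih ((List.mem_cons.mp h).resolve_left hab)

theorem ofRightSpine_congr {f g : ℕ → BTree} {as : List ℕ} (h : ∀ a ∈ as, f a = g a) :
    ofRightSpine f as = ofRightSpine g as := by
  induction as <;> simp_all [ofRightSpine]

theorem ofRightSpine_leftOf {T : BTree} (h : T.rightSpine.Nodup) :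
    ofRightSpine T.leftOf T.rightSpine = T := by
  induction T with
  | leaf => rfl
  | node a l r _ ih =>
    rw [rightSpine, List.nodup_cons] at h
    simp only [rightSpine, ofRightSpine, leftOf, ↓reduceIte]
    rw [ofRightSpine_congr (g := r.leftOf) fun b hb => if_neg (ne_of_mem_of_not_mem hb h.1),
      ih h.2]

theorem rightSpine_subset_labels (T : BTree) : T.rightSpine ⊆ T.labels := by
  induction T with
  | leaf => simp [rightSpine]
  | node a l r _ ih =>
    intro b hb
    simp only [rightSpine, List.mem_cons, labels, List.mem_append] at hb ⊢
    tauto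

theorem coe_labels_ofRightSpine (f : ℕ → BTree) (as : List ℕ) :
    (↑(ofRightSpine f as).labels : Multiset ℕ)
      = ↑as + (as.map fun a => ↑(f a).labels).sum := by
  induction as with
  | nil => simp [ofRightSpine, labels]
  | cons a as ih =>
    simp only [ofRightSpine, labels, ← Multiset.cons_coe, ← Multiset.coe_add, ih,
      List.map_cons, List.sum_cons, Multiset.cons_add]
    rw [add_left_comm]

theorem coe_labels_eq {T : BTree} {K : Finset ℕ} (hT : T.rightSpine.Nodup)
    (hK : T.rightSpine.toFinset = K) :
    (↑T.labels : Multiset ℕ) = K.val + ∑ a : K, ↑(T.leftOf a).labels := by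
  subst hK
  conv_lhs => rw [← ofRightSpine_leftOf hT]
  rw [coe_labels_ofRightSpine, sum_coe_sort _ fun a => (↑(T.leftOf a).labels : Multiset ℕ),
    List.sum_toFinset _ hT, List.toFinset_val, hT.dedup]

theorem rightDesc.sortedGT_rightSpine {T : BTree} (h : T.rightDesc) : T.rightSpine.SortedGT := by
  rw [List.sortedGT_iff_isChain]
  induction T with
  | leaf => exact .nil
  | node a l r _ ih =>
    obtain ⟨-, hr, hroot⟩ := h
    cases r with
    | leaf => exact .singleton a
    | node b x y => exact .cons_cons (hroot b x y rfl) (ih hr)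

theorem rightDesc.leftOf {T : BTree} (h : T.rightDesc) (a : ℕ) : (T.leftOf a).rightDesc := by
  induction T with
  | leaf => trivial
  | node b l r _ ih =>
    simp only [BTree.leftOf]
    split_ifs
    exacts [h.1, ih h.2.1]

theorem rightDesc_ofRightSpine {f : ℕ → BTree} {as : List ℕ} (has : as.IsChain (· > ·))
    (hf : ∀ a ∈ as, (f a).rightDesc) : (ofRightSpine f as).rightDesc := by
  induction has with
  | nil => trivial
  | singleton a => exact ⟨hf a (by simp), trivial, by simp [ofRightSpine]⟩
  | cons_cons hab _ ih =>
    refine ⟨hf _ (by simp), ih fun c hc => hf c (by simp [hc]), ?_⟩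
    rintro c x y hc
    cases hc
    exact hab

def ofSpineFinset (K : Finset ℕ) (f : K → BTree) : BTree :=
  ofRightSpine (fun a => if h : a ∈ K then f ⟨a, h⟩ else leaf) (K.sort (· ≥ ·))

theorem leftOf_ofSpineFinset {K : Finset ℕ} (f : K → BTree) (a : K) :
    (ofSpineFinset K f).leftOf a = f a := by
  rw [ofSpineFinset, leftOf_ofRightSpine ((mem_sort _).mpr a.2), dif_pos a.2]

theorem coe_labels_ofSpineFinset (K : Finset ℕ) (f : K → BTree) :
    (↑(ofSpineFinset K f).labels : Multiset ℕ) = K.val + ∑ a : K, ↑(f a).labels := by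
  rw [coe_labels_eq (K := K) (by simp [ofSpineFinset]) (by simp [ofSpineFinset])]
  simp only [leftOf_ofSpineFinset]

theorem rightDesc_ofSpineFinset {K : Finset ℕ} {f : K → BTree} (hf : ∀ a, (f a).rightDesc) :
    (ofSpineFinset K f).rightDesc :=
  rightDesc_ofRightSpine (sortedGT_sort K).isChain fun a ha => by
    rw [dif_pos ((mem_sort _).mp ha)]
    exact hf _

theorem ofSpineFinset_leftOf {T : BTree} (hT : T.rightDesc) :
    ofSpineFinset T.rightSpine.toFinset (fun a => T.leftOf a) = T := by
  have hsort : T.rightSpine.toFinset.sort (· ≥ ·) = T.rightSpine :=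
    (sortedGT_sort _).eq_of_mem_iff hT.sortedGT_rightSpine (by simp)
  rw [ofSpineFinset, hsort]
  conv_rhs => rw [← ofRightSpine_leftOf hT.sortedGT_rightSpine.nodup]
  exact ofRightSpine_congr fun a ha => dif_pos (List.mem_toFinset.mpr ha)

theorem finite_setOf_coe_labels_le (M : Multiset ℕ) :
    {T : BTree | (T.labels : Multiset ℕ) ≤ M}.Finite := by
  induction M using Multiset.strongInductionOn with
  | ih M ih =>
    have hsub (a) (ha : a ∈ M.toFinset) :
        {T : BTree | (T.labels : Multiset ℕ) ≤ M.erase a}.Finite :=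
      ih _ (Multiset.erase_lt.mpr (Multiset.mem_toFinset.mp ha))
    refine ((Set.finite_singleton leaf).union (M.toFinset.finite_toSet.biUnion fun a ha =>
      (hsub a ha).image2 (node a) (hsub a ha))).subset ?_
    rintro (_ | ⟨a, l, r⟩) h
    · exact .inl rfl
    · have h : a ::ₘ ((l.labels : Multiset ℕ) + r.labels) ≤ M := by simpa [labels] using h
      have hlr : (l.labels : Multiset ℕ) + r.labels ≤ M.erase a := by
        simpa using Multiset.erase_le_erase a h
      refine .inr (Set.mem_biUnion (x := a) ?_ ⟨l, ?_, r, ?_, rfl⟩)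
      · simpa using Multiset.mem_of_le h (Multiset.mem_cons_self _ _)
      · exact (Multiset.le_add_right _ _).trans hlr
      · exact (Multiset.le_add_left _ _).trans hlr

end BTree

theorem Nat.sum_range_mul_choose_mul_pow (m t : ℕ) :
    ∑ j ∈ range (m + 1), j * m.choose j * t ^ (m - j) = m * (t + 1) ^ (m - 1) := by
  cases m with
  | zero => simp
  | succ n =>
    rw [sum_range_succ', zero_mul, zero_mul, add_zero, add_tsub_cancel_right,
      add_comm t, add_pow, mul_sum]
    refine sum_congr rfl fun j _ => ?_
    rw [Nat.add_sub_add_right, one_pow, one_mul, Nat.cast_id, mul_comm (j + 1),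
      ← Nat.add_one_mul_choose_eq]
    ring

-- `k * (m + k) ^ (m - 1)` read in `ℚ`: at `m = 0` truncated subtraction would give `k`, not `1`.
def shiCount (m k : ℕ) : ℕ := if m = 0 then 1 else k * (m + k) ^ (m - 1)

theorem mul_shiCount (m k : ℕ) : (m + k) * shiCount m k = k * (m + k) ^ m := by
  unfold shiCount
  split_ifs with hm
  · simp [hm]
  · obtain ⟨n, rfl⟩ := Nat.exists_eq_succ_of_ne_zero hm
    rw [Nat.succ_sub_one, pow_succ]
    ring

theorem shiCount_succ (m k : ℕ) :
    shiCount m (k + 1) = ∑ j ∈ range (m + 1), m.choose j * shiCount (m - j) (j + k) := by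
  have hterm : ∀ j ∈ range (m + 1), (m + k) * (m.choose j * shiCount (m - j) (j + k))
      = j * m.choose j * (m + k) ^ (m - j) + k * (m.choose j * (m + k) ^ (m - j)) := by
    intro j hj
    have h := mul_shiCount (m - j) (j + k)
    rw [show m - j + (j + k) = m + k by grind] at h
    rw [mul_left_comm, h]
    ring
  have hpow : ∑ j ∈ range (m + 1), m.choose j * (m + k) ^ (m - j) = (m + k + 1) ^ m := by
    rw [add_comm (m + k) 1, add_pow]
    exact sum_congr rfl fun j _ => by rw [one_pow, Nat.cast_id]; ring
  have hsum : (m + k) * ∑ j ∈ range (m + 1), m.choose j * shiCount (m - j) (j + k)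
      = m * (m + k + 1) ^ (m - 1) + k * (m + k + 1) ^ m := by
    rw [mul_sum, sum_congr rfl hterm, sum_add_distrib, Nat.sum_range_mul_choose_mul_pow,
      ← mul_sum, hpow]
  rcases m with _ | n
  · simp [shiCount]
  rw [Nat.add_sub_cancel] at hsum
  refine Nat.eq_of_mul_eq_mul_left (show 0 < (n + 1 + k + 1) * (n + 1 + k) by positivity) ?_
  calc (n + 1 + k + 1) * (n + 1 + k) * shiCount (n + 1) (k + 1)
      = (n + 1 + k) * ((n + 1 + (k + 1)) * shiCount (n + 1) (k + 1)) := by ring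
    _ = (n + 1 + k + 1) * ((n + 1) * (n + 1 + k + 1) ^ n + k * (n + 1 + k + 1) ^ (n + 1)) := by
      rw [mul_shiCount]; ring
    _ = _ := by rw [← hsum]; ring

@[ext]
structure ShiForest (ι : Type*) [Fintype ι] (s : Finset ℕ) where
  tree : ι → BTree
  rightDesc : ∀ i, (tree i).rightDesc
  sum_labels : ∑ i, (↑(tree i).labels : Multiset ℕ) = s.val

namespace ShiForest

variable {ι κ : Type*} [Fintype ι] [Fintype κ] {s : Finset ℕ}

theorem coe_labels_le (v : ShiForest ι s) (i : ι) :
    (↑(v.tree i).labels : Multiset ℕ) ≤ s.val :=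
  (single_le_sum (f := fun i => (↑(v.tree i).labels : Multiset ℕ))
    (fun _ _ => Multiset.zero_le _) (mem_univ i)).trans v.sum_labels.le

instance : Finite (ShiForest ι s) :=
  have := (BTree.finite_setOf_coe_labels_le s.val).to_subtype
  Finite.of_injective
    (fun v i =>
      (⟨v.tree i, coe_labels_le v i⟩ : {T : BTree | (T.labels : Multiset ℕ) ≤ s.val}))
    fun _ _ h => ShiForest.ext (funext fun i => congrArg Subtype.val (congrFun h i))

def reindex (e : ι ≃ κ) : ShiForest ι s ≃ ShiForest κ s where
  toFun v := ⟨v.tree ∘ e.symm, fun _ => v.rightDesc _,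
    (e.symm.sum_comp fun i => (↑(v.tree i).labels : Multiset ℕ)).trans v.sum_labels⟩
  invFun v := ⟨v.tree ∘ e, fun _ => v.rightDesc _,
    (e.sum_comp fun i => (↑(v.tree i).labels : Multiset ℕ)).trans v.sum_labels⟩
  left_inv v := ShiForest.ext (funext fun i => by simp)
  right_inv v := ShiForest.ext (funext fun i => by simp)

theorem card_of_isEmpty [IsEmpty ι] : Nat.card (ShiForest ι s) = shiCount #s 0 := by
  by_cases hs : s = ∅
  · subst hs
    rw [card_empty, shiCount, if_pos rfl, Nat.card_eq_one_iff_unique]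
    exact ⟨⟨fun _ _ => ShiForest.ext (funext isEmptyElim)⟩,
      ⟨⟨isEmptyElim, isEmptyElim, by simp⟩⟩⟩
  · rw [shiCount, if_neg (card_ne_zero.mpr (nonempty_iff_ne_empty.mpr hs)), zero_mul,
      Nat.card_eq_zero]
    exact .inl ⟨fun v => hs (val_eq_zero.mp (by simpa using v.sum_labels.symm))⟩

def rootSpine (v : ShiForest (Option κ) s) : s.powerset :=
  ⟨(v.tree none).rightSpine.toFinset, mem_powerset.mpr fun _ ha => mem_val.mp <|
    Multiset.mem_of_le (coe_labels_le v none)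
      (Multiset.mem_coe.mpr ((v.tree none).rightSpine_subset_labels (List.mem_toFinset.mp ha)))⟩

def cutRootSpine (v : ShiForest (Option κ) s) {K : Finset ℕ}
    (hK : (v.tree none).rightSpine.toFinset = K) : ShiForest (K ⊕ κ) (s \ K) where
  tree := Sum.elim (fun a => (v.tree none).leftOf a) fun j => v.tree (some j)
  rightDesc := by rintro (a | j); exacts [(v.rightDesc none).leftOf a, v.rightDesc (some j)]
  sum_labels := by
    rw [Fintype.sum_sum_type, sdiff_val, ← v.sum_labels, Fintype.sum_option,
      BTree.coe_labels_eq (v.rightDesc none).sortedGT_rightSpine.nodup hK, add_assoc,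
      add_tsub_cancel_left]
    rfl

def graftRootSpine {K : Finset ℕ} (hK : K ⊆ s) (w : ShiForest (K ⊕ κ) (s \ K)) :
    ShiForest (Option κ) s where
  tree := Option.elim' (BTree.ofSpineFinset K fun a => w.tree (.inl a)) fun j => w.tree (.inr j)
  rightDesc := by
    rintro (_ | j)
    exacts [BTree.rightDesc_ofSpineFinset fun _ => w.rightDesc _, w.rightDesc _]
  sum_labels := by
    rw [Fintype.sum_option, Option.elim'_none, BTree.coe_labels_ofSpineFinset, add_assoc]
    simp only [Option.elim'_some]
    rw [← Fintype.sum_sum_type (f := fun x => (↑(w.tree x).labels : Multiset ℕ)),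
      w.sum_labels, sdiff_val, add_tsub_cancel_of_le (val_le_iff.mpr hK)]

def rootSpineFiberEquiv (K : s.powerset) :
    {v : ShiForest (Option κ) s // v.rootSpine = K} ≃ ShiForest (K.1 ⊕ κ) (s \ K.1) where
  toFun v := cutRootSpine v.1 (congrArg Subtype.val v.2)
  invFun w := ⟨graftRootSpine (mem_powerset.mp K.2) w,
    Subtype.ext (by simp [rootSpine, graftRootSpine, BTree.ofSpineFinset])⟩
  left_inv := by
    rintro ⟨v, rfl⟩
    refine Subtype.ext (ShiForest.ext (funext fun o => ?_))
    cases o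
    exacts [BTree.ofSpineFinset_leftOf (v.rightDesc none), rfl]
  right_inv w := by
    refine ShiForest.ext (funext fun x => ?_)
    cases x
    exacts [BTree.leftOf_ofSpineFinset (fun a => w.tree (.inl a)) _, rfl]

def optionEquivSigma :
    ShiForest (Option κ) s ≃ Σ K : s.powerset, ShiForest (K.1 ⊕ κ) (s \ K.1) :=
  (Equiv.sigmaFiberEquiv rootSpine).symm.trans (Equiv.sigmaCongrRight rootSpineFiberEquiv)

theorem card_option : Nat.card (ShiForest (Option κ) s)
    = ∑ K ∈ s.powerset, Nat.card (ShiForest (K ⊕ κ) (s \ K)) := by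
  rw [Nat.card_congr optionEquivSigma, Nat.card_sigma]
  exact sum_coe_sort s.powerset fun K => Nat.card (ShiForest (K ⊕ κ) (s \ K))

theorem card_fin (k : ℕ) (s : Finset ℕ) : Nat.card (ShiForest (Fin k) s) = shiCount #s k := by
  induction hN : #s + k using Nat.strong_induction_on generalizing k s with
  | _ N ih =>
    rcases k with _ | k
    · exact card_of_isEmpty
    calc Nat.card (ShiForest (Fin (k + 1)) s)
        = ∑ K ∈ s.powerset, shiCount (#s - #K) (#K + k) := by
          rw [Nat.card_congr (reindex (finSuccEquiv k)), card_option]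
          refine sum_congr rfl fun K hK => ?_
          have hKs := mem_powerset.mp hK
          have hlt : #(s \ K) + (#K + k) < N := by grind [card_le_card hKs, card_sdiff_of_subset]
          have e : K ⊕ Fin k ≃ Fin (#K + k) := Fintype.equivFinOfCardEq (by simp)
          rw [Nat.card_congr (reindex e), ih _ hlt _ _ rfl, card_sdiff_of_subset hKs]
      _ = shiCount #s (k + 1) := by
          rw [sum_powerset_apply_card (fun j => shiCount (#s - j) (j + k)), shiCount_succ]
          simp only [smul_eq_mul]

theorem card_eq_shiCount (ι : Type*) [Fintype ι] (s : Finset ℕ) :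
    Nat.card (ShiForest ι s) = shiCount #s (Fintype.card ι) := by
  rw [Nat.card_congr (reindex (Fintype.equivFin ι)), card_fin]

end ShiForest

/-- The number of binary trees with `n` nodes labeled bijectively by `{1,…,n}` such that
every right node has label smaller than its parent's label equals `(n+1)^(n-1)`. -/
theorem card_shi_trees (n : ℕ) :
    Nat.card {T : BTree // T.labels.Perm (List.range' 1 n) ∧ T.rightDesc}
      = (n + 1) ^ (n - 1) := by
  have e : {T : BTree // T.labels.Perm (List.range' 1 n) ∧ T.rightDesc} ≃
      ShiForest Unit (Icc 1 n) :=
    { toFun T := ⟨fun _ => T.1, fun _ => T.2.2, by simpa [Nat.Icc_eq_range'] using T.2.1⟩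
      invFun v := ⟨v.tree (), by simpa [Nat.Icc_eq_range'] using v.sum_labels, v.rightDesc ()⟩
      left_inv _ := rfl
      right_inv _ := ShiForest.ext rfl }
  rw [Nat.card_congr e, ShiForest.card_eq_shiCount, Nat.card_Icc, Fintype.card_unit, shiCount]
  rcases n with _ | n <;> simp
end

section
/- A set S of integers satisfying S = {-s : s ∈ S} is transitive if and only if the set of positive integers not in S is closed under addition. -/
/-- A set `S ⊆ ℤ` is transitive if: (1) for all `s,t ∉ S` with `s*t > 0`, `s+t ∉ S`;
and (2) for all `s,t ∉ S` with `s > 0` and `t ≤ 0`, both `s-t ∉ S` and `t-s ∉ S`. -/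
def IsTransitive (S : Set ℤ) : Prop :=
  (∀ s t : ℤ, s ∉ S → t ∉ S → 0 < s * t → s + t ∉ S) ∧
  (∀ s t : ℤ, s ∉ S → t ∉ S → 0 < s → t ≤ 0 → s - t ∉ S ∧ t - s ∉ S)

/-- A symmetric set `S = -S` is transitive iff the positive integers not in `S` are
closed under addition. -/
theorem symmetric_transitive_iff (S : Set ℤ) (hsym : ∀ s : ℤ, -s ∈ S ↔ s ∈ S) :
    IsTransitive S ↔
      ∀ s t : ℤ, 0 < s → 0 < t → s ∉ S → t ∉ S → s + t ∉ S := by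
  constructor
  · rintro ⟨h1, _⟩ s t hs ht hsS htS
    exact h1 s t hsS htS (mul_pos hs ht)
  · intro h
    constructor
    · intro s t hs ht hst
      rcases (mul_pos_iff.mp hst) with ⟨hs', ht'⟩ | ⟨hs', ht'⟩
      · exact h s t hs' ht' hs ht
      · have hns : -s ∉ S := fun hh => hs ((hsym s).mp hh)
        have hnt : -t ∉ S := fun hh => ht ((hsym t).mp hh)
        have := h (-s) (-t) (by omega) (by omega) hns hnt
        intro hh
        exact this (by rw [show -s + -t = -(s + t) by ring]; exact (hsym _).mpr hh)
    · intro s t hs ht hs' ht'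
      have hnt : -t ∉ S := fun hh => ht ((hsym t).mp hh)
      have hst : s - t ∉ S := by
        rcases eq_or_lt_of_le ht' with h0 | h0
        · rw [h0, sub_zero]; exact hs
        · have := h s (-t) hs' (by omega) hs hnt
          simpa [sub_eq_add_neg] using this
      exact ⟨hst, fun hh => hst ((hsym _).mp (by rwa [show t - s = -(s - t) by ring] at hh))⟩
end

section
/- Let m be a positive integer and S ⊆ ℤ with [1..m] ⊆ S ⊆ [-m..m]. Then S is transitive if and only if the set of negative integers not in S is closed under addition. -/
/-- If `[1..m] ⊆ S ⊆ [-m..m]` for a positive integer `m`, then `S` is transitive iff the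
negative integers not in `S` are closed under addition. -/
theorem positive_interval_transitive_iff (m : ℕ) (hm : 0 < m) (S : Set ℤ)
    (h1 : Set.Icc (1 : ℤ) (m : ℤ) ⊆ S) (h2 : S ⊆ Set.Icc (-(m : ℤ)) (m : ℤ)) :
    IsTransitive S ↔
      ∀ s t : ℤ, s < 0 → t < 0 → s ∉ S → t ∉ S → s + t ∉ S := by
  have hgt : ∀ x : ℤ, 0 < x → x ∉ S → (m : ℤ) < x := by
    intro x hx hxS
    by_contra h
    exact hxS (h1 ⟨hx, by omega⟩)
  have hout : ∀ x : ℤ, (m : ℤ) < x → x ∉ S := by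
    intro x hx hxS
    have := h2 hxS
    rw [Set.mem_Icc] at this
    omega
  have houtneg : ∀ x : ℤ, x < -(m : ℤ) → x ∉ S := by
    intro x hx hxS
    have := h2 hxS
    rw [Set.mem_Icc] at this
    omega
  constructor
  · rintro ⟨hc1, _⟩ s t hs ht hsS htS
    exact hc1 s t hsS htS (mul_pos_of_neg_of_neg hs ht)
  · intro H
    constructor
    · intro s t hsS htS hpos
      rcases lt_trichotomy s 0 with hs | hs | hs
      · have ht : t < 0 := by nlinarith
        exact H s t hs ht hsS htS
      · simp [hs] at hpos
      · have ht : 0 < t := by nlinarith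
        exact hout _ (by have := hgt s hs hsS; have := hgt t ht htS; omega)
    · intro s t hsS htS hs ht
      have hms := hgt s hs hsS
      exact ⟨hout _ (by omega), houtneg _ (by omega)⟩
end

section
/- Let S be a transitive finite set of integers. A cadet sequence (v_1,...,v_k) in an (m+1)-ary labeled tree is an S-cadet sequence if and only if for all i ∈ [k-1]: ls(v_{i+1}) ∈ S ∪ {0} implies v_i < v_{i+1}, and -ls(v_{i+1}) ∈ S implies v_i > v_{i+1}. -/
/-- Rooted plane `(m+1)`-ary trees with labeled nodes. -/
inductive LTree (m : ℕ) : Type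
  | leaf : LTree m
  | node (label : ℕ) (children : Fin (m + 1) → LTree m) : LTree m

/-- Node labels in prefix order. -/
def LTree.labels {m : ℕ} : LTree m → List ℕ
  | .leaf => []
  | .node a c => a :: (List.ofFn fun i => (c i).labels).flatten

/-- `Subtree t T` : the tree `t` occurs as a subtree of `T`. -/
inductive Subtree {m : ℕ} : LTree m → LTree m → Prop
  | refl (t : LTree m) : Subtree t t
  | child (t : LTree m) (a : ℕ) (c : Fin (m + 1) → LTree m) (i : Fin (m + 1)) :
      Subtree t (c i) → Subtree t (LTree.node a c)

/-- `Chain t ls ds` : starting from the root node of `t`, repeatedly moving to the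
cadet-node (the rightmost child that is a node) produces the cadet sequence with
labels `ls = [label v₁, …, label vₖ]` and left-sibling counts `ds = [ls v₂, …, ls vₖ]`. -/
inductive Chain {m : ℕ} : LTree m → List ℕ → List ℕ → Prop
  | single (a : ℕ) (c : Fin (m + 1) → LTree m) : Chain (.node a c) [a] []
  | cons (a : ℕ) (c : Fin (m + 1) → LTree m) (i : Fin (m + 1)) (ls ds : List ℕ) :
      (∀ j, i < j → c j = LTree.leaf) → Chain (c i) ls ds →
      Chain (.node a c) (a :: ls) (i.val :: ds)

/-- The (global) `S`-cadet sequence condition: for all `i < j`, if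
`Σ_{p=i+1}^{j} ls(v_p) ∈ S ∪ {0}` then `v_i < v_j`, and if `-Σ_{p=i+1}^{j} ls(v_p) ∈ S`
then `v_i > v_j` (with 0-based indexing of `ls` and `ds`). -/
def SCadetSeq (S : Set ℤ) (ls ds : List ℕ) : Prop :=
  ∀ i j : ℕ, i < j → j < ls.length →
    (((((ds.drop i).take (j - i)).sum : ℤ) ∈ S ∪ {0} → ls.getD i 0 < ls.getD j 0) ∧
     ((-(((ds.drop i).take (j - i)).sum : ℤ)) ∈ S → ls.getD j 0 < ls.getD i 0))

/-- The local condition: for consecutive elements, if `ls(v_{i+1}) ∈ S ∪ {0}` then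
`v_i < v_{i+1}`, and if `-ls(v_{i+1}) ∈ S` then `v_i > v_{i+1}`. -/
def LocalCadet (S : Set ℤ) (ls ds : List ℕ) : Prop :=
  ∀ i : ℕ, i + 1 < ls.length →
    (((ds.getD i 0 : ℤ) ∈ S ∪ {0} → ls.getD i 0 < ls.getD (i + 1) 0) ∧
     ((-(ds.getD i 0 : ℤ)) ∈ S → ls.getD (i + 1) 0 < ls.getD i 0))

def wsum (ds : List ℕ) (i j : ℕ) : ℤ := (((ds.drop i).take (j - i)).sum : ℤ)

lemma wsum_nonneg (ds : List ℕ) (i j : ℕ) : 0 ≤ wsum ds i j := Int.natCast_nonneg _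

lemma wsum_self (ds : List ℕ) (i : ℕ) : wsum ds i i = 0 := by simp [wsum]

lemma wsum_succ_left (ds : List ℕ) (i j : ℕ) (h : i < j) :
    wsum ds i j = (ds.getD i 0 : ℤ) + wsum ds (i+1) j := by
  unfold wsum
  have hji : j - i = (j - (i+1)) + 1 := by omega
  rw [hji]
  by_cases hi : i < ds.length
  · rw [List.drop_eq_getElem_cons hi, List.take_succ_cons, List.sum_cons,
      List.getD_eq_getElem ds 0 hi]
    push_cast; ring
  · have h1 : ds.drop i = [] := List.drop_eq_nil_of_le (by omega)
    have h2 : ds.drop (i+1) = [] := List.drop_eq_nil_of_le (by omega)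
    have h3 : ds[i]? = none := List.getElem?_eq_none (by omega)
    simp [h1, h2, h3]

lemma wsum_single (ds : List ℕ) (i : ℕ) : wsum ds i (i+1) = (ds.getD i 0 : ℤ) := by
  rw [wsum_succ_left ds i (i+1) (Nat.lt_succ_self i), wsum_self]; ring

lemma local_to_global (S : Set ℤ) (htrans : IsTransitive S) (ls ds : List ℕ)
    (hloc : LocalCadet S ls ds) :
    ∀ n i j : ℕ, i < j → j < ls.length → j - i ≤ n →
      ((wsum ds i j ∈ S ∪ {0} → ls.getD i 0 < ls.getD j 0) ∧
       ((-wsum ds i j) ∈ S → ls.getD j 0 < ls.getD i 0)) := by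
  intro n
  induction n with
  | zero => intro i j hij _ hn; omega
  | succ n IH =>
    intro i j hij hj hn
    by_cases hstep : j = i + 1
    · subst hstep
      have h2 := hloc i hj
      rwa [← wsum_single ds i] at h2
    · have hij2 : i + 1 < j := by omega
      have hp : i + 1 < ls.length := lt_trans hij2 hj
      have hA := IH i (i+1) (Nat.lt_succ_self i) hp (by omega)
      have hB := IH (i+1) j hij2 hj (by omega)
      set A := wsum ds i (i+1) with hAdef
      set B := wsum ds (i+1) j with hBdef
      have hW : wsum ds i j = A + B := by
        rw [wsum_succ_left ds i j (by omega), hAdef, wsum_single]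
      have hA0 : 0 ≤ A := wsum_nonneg ds i (i+1)
      have hB0 : 0 ≤ B := wsum_nonneg ds (i+1) j
      rw [hW]
      constructor
      · intro hmem
        by_cases hA0' : A = 0
        · rw [hA0', zero_add] at hmem
          exact lt_trans (hA.1 (Or.inr (Set.mem_singleton_iff.mpr hA0'))) (hB.1 hmem)
        · by_cases hB0' : B = 0
          · rw [hB0', add_zero] at hmem
            exact lt_trans (hA.1 hmem) (hB.1 (Or.inr (Set.mem_singleton_iff.mpr hB0')))
          · have hApos : 0 < A := lt_of_le_of_ne hA0 (Ne.symm hA0')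
            have hBpos : 0 < B := lt_of_le_of_ne hB0 (Ne.symm hB0')
            have hWS : A + B ∈ S := by
              rcases hmem with h | h
              · exact h
              · exfalso; have : A + B = 0 := h; omega
            by_cases hAS : A ∈ S
            · by_cases hBS : B ∈ S
              · exact lt_trans (hA.1 (Or.inl hAS)) (hB.1 (Or.inl hBS))
              · by_cases hAm : -A ∈ S
                · exact absurd (hA.1 (Or.inl hAS)) (not_lt_of_gt (hA.2 hAm))
                · exfalso
                  have h2 := (htrans.2 B (-A) hBS hAm hBpos (by linarith)).1
                  apply h2
                  have e : B - -A = A + B := by ring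
                  rw [e]; exact hWS
            · have hBS : B ∈ S := by
                by_contra hBS
                exact htrans.1 A B hAS hBS (mul_pos hApos hBpos) hWS
              by_cases hBm : -B ∈ S
              · exact absurd (hB.1 (Or.inl hBS)) (not_lt_of_gt (hB.2 hBm))
              · exfalso
                have h2 := (htrans.2 A (-B) hAS hBm hApos (by linarith)).1
                apply h2
                have e : A - -B = A + B := by ring
                rw [e]; exact hWS
      · intro hneg
        by_cases hA0' : A = 0
        · by_cases hW0 : A + B = 0
          · exfalso
            have hz : (0:ℤ) ∈ S := by rw [hW0, neg_zero] at hneg; exact hneg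
            have p1 := hA.1 (Or.inr (Set.mem_singleton_iff.mpr hA0'))
            have p2 := hA.2 (by rw [hA0', neg_zero]; exact hz)
            omega
          · have hWpos : 0 < A + B := by omega
            by_cases hWS : A + B ∈ S
            · exfalso
              rw [hA0', zero_add] at hWS hneg
              exact absurd (hB.1 (Or.inl hWS)) (not_lt_of_gt (hB.2 hneg))
            · by_cases h0S : (0:ℤ) ∈ S
              · exfalso
                have p1 := hA.1 (Or.inr (Set.mem_singleton_iff.mpr hA0'))
                have p2 := hA.2 (by rw [hA0', neg_zero]; exact h0S)
                omega
              · exfalso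
                exact (htrans.2 (A+B) 0 hWS h0S hWpos le_rfl).2
                  (by rw [zero_sub]; exact hneg)
        · by_cases hB0' : B = 0
          · have hWpos : 0 < A + B := by omega
            by_cases hWS : A + B ∈ S
            · exfalso
              rw [hB0', add_zero] at hWS hneg
              exact absurd (hA.1 (Or.inl hWS)) (not_lt_of_gt (hA.2 hneg))
            · by_cases h0S : (0:ℤ) ∈ S
              · exfalso
                have p1 := hB.1 (Or.inr (Set.mem_singleton_iff.mpr hB0'))
                have p2 := hB.2 (by rw [hB0', neg_zero]; exact h0S)
                omega
              · exfalso
                exact (htrans.2 (A+B) 0 hWS h0S hWpos le_rfl).2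
                  (by rw [zero_sub]; exact hneg)
          · have hApos : 0 < A := lt_of_le_of_ne hA0 (Ne.symm hA0')
            have hBpos : 0 < B := lt_of_le_of_ne hB0 (Ne.symm hB0')
            by_cases hAm : -A ∈ S
            · by_cases hBm : -B ∈ S
              · exact lt_trans (hB.2 hBm) (hA.2 hAm)
              · exfalso
                by_cases hAS : A ∈ S
                · exact absurd (hA.1 (Or.inl hAS)) (not_lt_of_gt (hA.2 hAm))
                · have h2 := (htrans.2 A (-B) hAS hBm hApos (by linarith)).2
                  apply h2
                  have e : -B - A = -(A + B) := by ring
                  rw [e]; exact hneg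
            · have hBm : -B ∈ S := by
                by_contra hBm
                have h2 := htrans.1 (-A) (-B) hAm hBm
                  (mul_pos_of_neg_of_neg (by linarith) (by linarith))
                apply h2
                have e : -A + -B = -(A + B) := by ring
                rw [e]; exact hneg
              exfalso
              by_cases hBS : B ∈ S
              · exact absurd (hB.1 (Or.inl hBS)) (not_lt_of_gt (hB.2 hBm))
              · have h2 := (htrans.2 B (-A) hBS hAm hBpos (by linarith)).2
                apply h2
                have e : -A - B = -(A + B) := by ring
                rw [e]; exact hneg

/-- For a transitive finite set `S`, a cadet sequence of a labeled `(m+1)`-ary tree is an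
`S`-cadet sequence iff it satisfies the local condition on consecutive elements. -/
theorem scadet_iff_local (m : ℕ) (S : Set ℤ) (hfin : S.Finite) (htrans : IsTransitive S)
    (T t : LTree m) (hnd : T.labels.Nodup) (hsub : Subtree t T)
    (ls ds : List ℕ) (hchain : Chain t ls ds) :
    SCadetSeq S ls ds ↔ LocalCadet S ls ds := by
  constructor
  · intro h i hi
    have h2 := h i (i+1) (Nat.lt_succ_self i) hi
    rwa [show ((((ds.drop i).take (i+1-i)).sum : ℕ) : ℤ) = (ds.getD i 0 : ℤ) from
      wsum_single ds i] at h2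
  · intro hloc i j hij hj
    exact local_to_global S htrans ls ds hloc (j - i) i j hij hj le_rfl
end

section
/- Let ŵ be a word of length (m+1)n on the alphabet {α_i^{(s)} : i ∈ [n], s ∈ [0..m]} using each letter exactly once, such that for all i and s ∈ [m] the letter α_i^{(s-1)} appears before α_i^{(s)}, and for all i,j and s,t ∈ [m], if α_i^{(s-1)} appears before α_j^{(t-1)} then α_i^{(s)} appears before α_j^{(t)}. Then for any prefix of ŵ containing a letters of the form α_i^{(0)} and b letters of the form α_i^{(s)} with s ≥ 1, one has b ≤ m·a. -/
/-!
Every letter `α_i^{(s)}` of a prefix drags `α_i^{(0)}` into the prefix with it, since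
`α_i^{(0)}, α_i^{(1)}, …, α_i^{(s)}` occur in this order. So the letters with `s ≥ 1` of a
prefix inject into pairs `(i, s)` with `α_i^{(0)}` in the prefix and `1 ≤ s ≤ m`.
-/

lemma length_filter_snd_ne_zero_le_mul {t : List (ℕ × ℕ)} (m : ℕ) (hnodup : t.Nodup)
    (hle : ∀ p ∈ t, p.2 ≤ m) (hzero : ∀ p ∈ t, (p.1, 0) ∈ t) :
    (t.filter (fun p => p.2 ≠ 0)).length ≤ m * (t.filter (fun p => p.2 = 0)).length := by
  set A := t.filter (fun p => p.2 = 0)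
  set B := t.filter (fun p => p.2 ≠ 0)
  have hsub : B.toFinset ⊆ A.toFinset.image Prod.fst ×ˢ Finset.Icc 1 m := by
    intro p hp
    simp only [B, List.mem_toFinset, List.mem_filter, decide_eq_true_eq] at hp
    have hp0 : (p.1, 0) ∈ A.toFinset := by simpa [A] using hzero p hp.1
    exact Finset.mem_product.2
      ⟨Finset.mem_image.2 ⟨_, hp0, rfl⟩, Finset.mem_Icc.2 ⟨Nat.one_le_iff_ne_zero.2 hp.2, hle p hp.1⟩⟩
  calc B.length = B.toFinset.card := (List.toFinset_card_of_nodup (hnodup.filter _)).symm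
    _ ≤ (A.toFinset.image Prod.fst).card * m := by
      simpa using Finset.card_le_card hsub
    _ ≤ A.toFinset.card * m := Nat.mul_le_mul_right m Finset.card_image_le
    _ = m * A.length := by rw [List.toFinset_card_of_nodup (hnodup.filter _), Nat.mul_comm]

lemma mk_zero_mem_take_of_mk_mem_take {n m : ℕ} {w : List (ℕ × ℕ)}
    (hmem : ∀ p : ℕ × ℕ, p ∈ w ↔ (p.1 < n ∧ p.2 ≤ m))
    (hb : ∀ i s : ℕ, i < n → 1 ≤ s → s ≤ m → w.idxOf (i, s - 1) < w.idxOf (i, s))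
    {k i : ℕ} : ∀ s, (i, s) ∈ w.take k → (i, 0) ∈ w.take k
  | 0, h => h
  | s + 1, h => by
    have hcur : (i, s + 1) ∈ w := List.mem_of_mem_take h
    obtain ⟨hi, hs⟩ := (hmem _).1 hcur
    have hprev : (i, s) ∈ w := (hmem _).2 ⟨hi, by omega⟩
    refine mk_zero_mem_take_of_mk_mem_take hmem hb s ((List.mem_take_iff_idxOf_lt hprev).2 ?_)
    exact (hb i (s + 1) hi (by omega) hs).trans ((List.mem_take_iff_idxOf_lt hcur).1 h)

theorem annotated_sketch_prefix_general (n m : ℕ) (w : List (ℕ × ℕ))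
    (hmem : ∀ p : ℕ × ℕ, p ∈ w ↔ (p.1 < n ∧ p.2 ≤ m))
    (hnodup : w.Nodup)
    (hb : ∀ i s : ℕ, i < n → 1 ≤ s → s ≤ m →
      w.idxOf (i, s - 1) < w.idxOf (i, s))
    (k : ℕ) :
    ((w.take k).filter (fun p => p.2 ≠ 0)).length
      ≤ m * ((w.take k).filter (fun p => p.2 = 0)).length :=
  length_filter_snd_ne_zero_le_mul m (hnodup.sublist (List.take_sublist k w))
    (fun p hp => ((hmem p).1 (List.mem_of_mem_take hp)).2)
    (fun p hp => mk_zero_mem_take_of_mk_mem_take hmem hb p.2 hp)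

/-- Let `ŵ` be a word on the alphabet `{α_i^{(s)} : i ∈ [n], s ∈ [0..m]}` (letters encoded
as pairs `(i,s)` with `i < n`, `s ≤ m`) using each letter exactly once, such that
`α_i^{(s-1)}` appears before `α_i^{(s)}` for all `i` and `s ∈ [m]`, and such that if
`α_i^{(s-1)}` appears before `α_j^{(t-1)}` then `α_i^{(s)}` appears before `α_j^{(t)}`.
Then every prefix contains at most `m` times as many letters with `s ≥ 1` as letters
with `s = 0`. -/
theorem annotated_sketch_prefix (n m : ℕ) (w : List (ℕ × ℕ))
    (hmem : ∀ p : ℕ × ℕ, p ∈ w ↔ (p.1 < n ∧ p.2 ≤ m))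
    (hnodup : w.Nodup)
    (hb : ∀ i s : ℕ, i < n → 1 ≤ s → s ≤ m →
      w.idxOf (i, s - 1) < w.idxOf (i, s))
    (hc : ∀ i j s t : ℕ, i < n → j < n → 1 ≤ s → s ≤ m → 1 ≤ t → t ≤ m →
      w.idxOf (i, s - 1) < w.idxOf (j, t - 1) →
      w.idxOf (i, s) < w.idxOf (j, t))
    (k : ℕ) :
    ((w.take k).filter (fun p => p.2 ≠ 0)).length
      ≤ m * ((w.take k).filter (fun p => p.2 = 0)).length :=
  annotated_sketch_prefix_general n m w hmem hnodup hb k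
end
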